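/- arXiv:1605.06404 — 3 statements merged into one kernel-verified Lean document; each statement's English description precedes it below -/
import Mathlib

section
/- For every $\epsilon > 0$, let $U_\epsilon : \mathbb{R}^3 \to \mathbb{R}$ be defined by $U_\epsilon(x) = (3\epsilon^2)^{1/4}(\epsilon^2 + |x|^2)^{-1/2}$. Then $\int_{\mathbb{R}^3} |\nabla U_\epsilon(x)|^2 \, dx = \int_{\mathbb{R}^3} |U_\epsilon(x)|^6 \, dx = \frac{3\sqrt{3}\,\pi^2}{4}$; in particular both integrals equal $S^{3/2}$ with $S = 3(\pi/2)^{4/3}$, independently of $\epsilon$. -/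
open MeasureTheory Real

noncomputable section

/-- The Aubin–Talenti extremal `U_ε(x) = (3ε²)^{1/4} (ε² + |x|²)^{-1/2}` on ℝ³. -/
def Ueps (ε : ℝ) (x : EuclideanSpace ℝ (Fin 3)) : ℝ :=
  (3 * ε ^ 2) ^ ((1 : ℝ) / 4) * (ε ^ 2 + ‖x‖ ^ 2) ^ (-(1 : ℝ) / 2)

/-!
Since `|∇U_ε(x)|² = √3 ε |x|² / (ε² + |x|²)³` and `U_ε(x)⁶ = 3√3 ε³ / (ε² + |x|²)³` are radial,
polar coordinates in ℝ³ turn the energies into multiples of `∫₀^∞ y⁴ / (ε² + y²)³ dy` and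
`∫₀^∞ y² / (ε² + y²)³ dy`. Both integrands have explicit antiderivatives of the form
`k arctan (y / ε) + (b y³ + c y) / (ε² + y²)²`, which vanish at `0` and tend to `k π / 2`.
-/

open Set Filter Topology

section ArctanAntiderivative

variable {a : ℝ}

theorem hasDerivAt_arctan_add_rational (ha : a ≠ 0) (k b c y : ℝ) :
    HasDerivAt (fun y => k * arctan (y / a) + (b * y ^ 3 + c * y) / (a ^ 2 + y ^ 2) ^ 2)
      ((k * a * (a ^ 2 + y ^ 2) ^ 2 + (3 * b * y ^ 2 + c) * (a ^ 2 + y ^ 2)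
        - 4 * y ^ 2 * (b * y ^ 2 + c)) / (a ^ 2 + y ^ 2) ^ 3) y := by
  have harctan := ((hasDerivAt_id' y).div_const a).arctan.const_mul k
  have hnum := ((hasDerivAt_pow 3 y).const_mul b).fun_add ((hasDerivAt_id' y).const_mul c)
  have hden := ((hasDerivAt_pow 2 y).const_add (a ^ 2)).fun_pow 2
  refine (harctan.fun_add (hnum.fun_div hden (by positivity))).congr_deriv ?_
  field_simp
  ring

theorem tendsto_cubic_div_sq_add_sq_sq_atTop (b c : ℝ) :
    Tendsto (fun y => (b * y ^ 3 + c * y) / (a ^ 2 + y ^ 2) ^ 2) atTop (𝓝 0) := by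
  have hbound :
      ∀ᶠ y in atTop, ‖(b * y ^ 3 + c * y) / (a ^ 2 + y ^ 2) ^ 2‖ ≤ (|b| + |c|) / y := by
    filter_upwards [eventually_ge_atTop 1] with y hy
    have hy0 : 0 < y := by linarith
    have hnum : |b * y ^ 3 + c * y| ≤ (|b| + |c|) * y ^ 3 := by
      calc |b * y ^ 3 + c * y| ≤ |b * y ^ 3| + |c * y| := abs_add_le _ _
        _ = |b| * y ^ 3 + |c| * y := by
            rw [abs_mul, abs_mul, abs_of_pos hy0, abs_of_pos (pow_pos hy0 3)]
        _ ≤ (|b| + |c|) * y ^ 3 := by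
            nlinarith [mul_le_mul_of_nonneg_left (le_self_pow₀ hy (n := 3) (by norm_num))
              (abs_nonneg c)]
    have hden : y ^ 4 ≤ (a ^ 2 + y ^ 2) ^ 2 := by nlinarith [sq_nonneg a, sq_nonneg y]
    have hden0 : 0 < (a ^ 2 + y ^ 2) ^ 2 := by positivity
    rw [norm_div, Real.norm_eq_abs, Real.norm_eq_abs, abs_of_pos hden0,
      div_le_div_iff₀ hden0 hy0]
    nlinarith [mul_le_mul_of_nonneg_right hnum hy0.le,
      mul_le_mul_of_nonneg_left hden (by positivity : 0 ≤ |b| + |c|)]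
  exact squeeze_zero_norm' hbound (tendsto_const_nhds.div_atTop tendsto_id)

-- `hf` says that `f` is the derivative of
-- `k * arctan (y / a) + (b * y ^ 3 + c * y) / (a ^ 2 + y ^ 2) ^ 2`.
theorem integral_Ioi_of_arctan_add_rational_antideriv (ha : 0 < a) {k b c : ℝ} {f : ℝ → ℝ}
    (hf : ∀ y, f y * (a ^ 2 + y ^ 2) ^ 3 = k * a * (a ^ 2 + y ^ 2) ^ 2
      + (3 * b * y ^ 2 + c) * (a ^ 2 + y ^ 2) - 4 * y ^ 2 * (b * y ^ 2 + c))
    (hf_nonneg : ∀ y, 0 < y → 0 ≤ f y) :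
    ∫ y in Ioi 0, f y = k * (π / 2) := by
  have hderiv : ∀ y ∈ Ici (0 : ℝ), HasDerivAt
      (fun y => k * arctan (y / a) + (b * y ^ 3 + c * y) / (a ^ 2 + y ^ 2) ^ 2) (f y) y := by
    intro y _
    rw [eq_div_of_mul_eq (by positivity) (hf y)]
    exact hasDerivAt_arctan_add_rational ha.ne' k b c y
  have hlim : Tendsto (fun y => k * arctan (y / a) + (b * y ^ 3 + c * y) / (a ^ 2 + y ^ 2) ^ 2)
      atTop (𝓝 (k * (π / 2) + 0)) :=
    ((tendsto_arctan_atTop.mono_right nhdsWithin_le_nhds).comp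
      (tendsto_id.atTop_div_const ha) |>.const_mul k).add
      (tendsto_cubic_div_sq_add_sq_sq_atTop b c)
  rw [integral_Ioi_of_hasDerivAt_of_nonneg' hderiv hf_nonneg hlim]
  simp

theorem integral_Ioi_sq_div_sq_add_sq_pow_three (ha : 0 < a) :
    ∫ y in Ioi 0, y ^ 2 / (a ^ 2 + y ^ 2) ^ 3 = π / (16 * a ^ 3) := by
  rw [integral_Ioi_of_arctan_add_rational_antideriv ha (k := 1 / (8 * a ^ 3))
    (b := 1 / (8 * a ^ 2)) (c := -1 / 8) (fun y => by field_simp; ring) (fun y _ => by positivity)]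
  field_simp
  ring

theorem integral_Ioi_pow_four_div_sq_add_sq_pow_three (ha : 0 < a) :
    ∫ y in Ioi 0, y ^ 4 / (a ^ 2 + y ^ 2) ^ 3 = 3 * π / (16 * a) := by
  rw [integral_Ioi_of_arctan_add_rational_antideriv ha (k := 3 / (8 * a)) (b := -5 / 8)
    (c := -3 * a ^ 2 / 8) (fun y => by field_simp; ring) (fun y _ => by positivity)]
  field_simp
  ring

end ArctanAntiderivative

theorem integral_fun_norm_euclideanSpace_fin_three {F : Type*} [NormedAddCommGroup F]
    [NormedSpace ℝ F] (f : ℝ → F) :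
    ∫ x : EuclideanSpace ℝ (Fin 3), f ‖x‖ = (4 * π) • ∫ y in Ioi (0 : ℝ), y ^ 2 • f y := by
  rw [integral_fun_norm_addHaar volume f, measureReal_def, EuclideanSpace.volume_ball_fin_three,
    finrank_euclideanSpace_fin, ENNReal.ofReal_one, one_pow, one_mul,
    ENNReal.toReal_ofReal (by positivity), ← Nat.cast_smul_eq_nsmul ℝ, smul_smul]
  congr 1
  ring

theorem integral_inv_sq_add_norm_sq_pow_three {a : ℝ} (ha : 0 < a) :
    ∫ x : EuclideanSpace ℝ (Fin 3), 1 / (a ^ 2 + ‖x‖ ^ 2) ^ 3 = π ^ 2 / (4 * a ^ 3) := by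
  refine (integral_fun_norm_euclideanSpace_fin_three
    fun r => 1 / (a ^ 2 + r ^ 2) ^ 3).trans ?_
  simp_rw [smul_eq_mul, mul_one_div]
  rw [integral_Ioi_sq_div_sq_add_sq_pow_three ha]
  ring

theorem integral_norm_sq_div_sq_add_norm_sq_pow_three {a : ℝ} (ha : 0 < a) :
    ∫ x : EuclideanSpace ℝ (Fin 3), ‖x‖ ^ 2 / (a ^ 2 + ‖x‖ ^ 2) ^ 3 = 3 * π ^ 2 / (4 * a) := by
  refine (integral_fun_norm_euclideanSpace_fin_three
    fun r => r ^ 2 / (a ^ 2 + r ^ 2) ^ 3).trans ?_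
  simp_rw [smul_eq_mul, mul_div_assoc', ← pow_add]
  rw [integral_Ioi_pow_four_div_sq_add_sq_pow_three ha]
  ring

theorem hasGradientAt_mul_rpow_add_norm_sq {E : Type*} [NormedAddCommGroup E]
    [InnerProductSpace ℝ E] [CompleteSpace E] {c : ℝ} (hc : 0 < c) (k p : ℝ) (x : E) :
    HasGradientAt (fun x => k * (c + ‖x‖ ^ 2) ^ p)
      ((2 * k * p * (c + ‖x‖ ^ 2) ^ (p - 1)) • x) x := by
  have hpos : 0 < c + ‖x‖ ^ 2 := by positivity
  have hinner : HasFDerivAt (fun x : E => c + ‖x‖ ^ 2) (2 • innerSL ℝ x) x := by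
    simpa using (hasFDerivAt_id x).norm_sq.const_add c
  have hcomp := ((hasDerivAt_rpow_const (p := p) (Or.inl hpos.ne')).const_mul k).comp_hasFDerivAt
    x hinner
  rw [hasGradientAt_iff_hasFDerivAt]
  refine hcomp.congr_fderiv ?_
  ext y
  simp only [smul_apply, coe_innerSL_apply, nsmul_eq_mul, Nat.cast_ofNat,
    smul_eq_mul, map_smul, InnerProductSpace.toDual_apply_apply]
  ring

theorem sq_rpow_one_fourth_three_mul_sq {ε : ℝ} (hε : 0 ≤ ε) :
    ((3 * ε ^ 2) ^ ((1 : ℝ) / 4)) ^ 2 = √3 * ε := by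
  rw [← rpow_mul_natCast (by positivity), show (1 : ℝ) / 4 * (2 : ℕ) = 1 / 2 by norm_num,
    ← sqrt_eq_rpow, sqrt_mul (by norm_num), sqrt_sq hε]

theorem norm_gradient_Ueps_sq {ε : ℝ} (hε : 0 < ε) (x : EuclideanSpace ℝ (Fin 3)) :
    ‖gradient (Ueps ε) x‖ ^ 2 = √3 * ε * (‖x‖ ^ 2 / (ε ^ 2 + ‖x‖ ^ 2) ^ 3) := by
  have hpos : 0 < ε ^ 2 + ‖x‖ ^ 2 := by positivity
  have hgrad : HasGradientAt (Ueps ε) _ x :=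
    hasGradientAt_mul_rpow_add_norm_sq (by positivity) ((3 * ε ^ 2) ^ ((1 : ℝ) / 4)) (-1 / 2) x
  rw [hgrad.gradient, norm_smul, mul_pow, norm_eq_abs, sq_abs, mul_pow, mul_pow, mul_pow,
    sq_rpow_one_fourth_three_mul_sq hε.le, ← rpow_mul_natCast hpos.le,
    show (-1 / 2 - 1 : ℝ) * (2 : ℕ) = -(3 : ℕ) by norm_num, rpow_neg hpos.le, rpow_natCast]
  ring

theorem abs_Ueps_pow_six {ε : ℝ} (hε : 0 ≤ ε) (x : EuclideanSpace ℝ (Fin 3)) :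
    |Ueps ε x| ^ 6 = 3 * √3 * ε ^ 3 * (1 / (ε ^ 2 + ‖x‖ ^ 2) ^ 3) := by
  have hpos : 0 ≤ ε ^ 2 + ‖x‖ ^ 2 := by positivity
  rw [abs_of_nonneg (by unfold Ueps; positivity), Ueps, mul_pow, ← rpow_mul_natCast hpos,
    show 6 = 2 * 3 by rfl, pow_mul, sq_rpow_one_fourth_three_mul_sq hε,
    show (-1 / 2 : ℝ) * (6 : ℕ) = -(3 : ℕ) by norm_num, rpow_neg hpos, rpow_natCast, mul_pow,
    pow_succ √3, sq_sqrt zero_le_three]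
  ring

/-- **Lemma 2.2 (energies of the extremal).** For every `ε > 0`,
`∫ |∇U_ε|² = ∫ |U_ε|⁶ = 3√3 π²/4`, and this common value equals `S^{3/2}` with
`S = 3 (π/2)^{4/3}`. -/
theorem Ueps_energies (ε : ℝ) (hε : 0 < ε) :
    (∫ x, ‖gradient (Ueps ε) x‖ ^ 2) = 3 * Real.sqrt 3 * π ^ 2 / 4 ∧
    (∫ x, |Ueps ε x| ^ 6) = 3 * Real.sqrt 3 * π ^ 2 / 4 ∧
    3 * Real.sqrt 3 * π ^ 2 / 4 = (3 * (π / 2) ^ ((4 : ℝ) / 3)) ^ ((3 : ℝ) / 2) := by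
  refine ⟨?_, ?_, ?_⟩
  · simp_rw [norm_gradient_Ueps_sq hε]
    rw [integral_const_mul, integral_norm_sq_div_sq_add_norm_sq_pow_three hε]
    field_simp
  · simp_rw [abs_Ueps_pow_six hε.le]
    rw [integral_const_mul, integral_inv_sq_add_norm_sq_pow_three hε]
    field_simp
  · rw [mul_rpow zero_le_three (by positivity), ← rpow_mul (by positivity),
      show (4 : ℝ) / 3 * (3 / 2) = (2 : ℕ) by norm_num, rpow_natCast,
      show (3 : ℝ) / 2 = 1 + 1 / 2 by norm_num, rpow_add three_pos, rpow_one, ← sqrt_eq_rpow]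
    ring
end
end

section
/- Let $a, b, S > 0$ and let $\eta > 0$, $\nu > 0$ be real numbers satisfying $\nu \le S^{-3} \eta^3$ and $\nu \ge a\eta + b\eta^2$. Then $\frac{a}{4}\eta + \frac{1}{12}\nu \ge \Lambda$, where $\Lambda = \frac{1}{4} a b S^3 + \frac{1}{24} b^3 S^6 + \frac{1}{24}(b^2 S^4 + 4 a S)^{3/2}$. -/
/-!
The two constraints combine to `aη + bη² ≤ η³ / S³`, i.e. `η² ≥ bS³ η + aS³`, so `η` lies
beyond the positive root `η₀ = (bS³ + S √(b²S⁴ + 4aS)) / 2` of `t² = bS³ t + aS³`.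
Using `ν ≥ aη + bη²`, the left-hand side is at least `aη/3 + bη²/12`, which increases in
`η > 0`, and its value at `η₀` is exactly `Λ`.
-/

open Real

theorem add_sqrt_discrim_div_two_le {p q x : ℝ} (hq : 0 ≤ q) (hx : 0 < x)
    (h : p * x + q ≤ x ^ 2) : (p + √(p ^ 2 + 4 * q)) / 2 ≤ x := by
  have hpx : p ≤ x := by nlinarith
  have hsqrt : √(p ^ 2 + 4 * q) ≤ 2 * x - p := sqrt_le_iff.2 ⟨by linarith, by nlinarith⟩
  linarith

theorem rpow_three_halves {x : ℝ} (hx : 0 ≤ x) : x ^ ((3 : ℝ) / 2) = x * √x := by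
  rw [show (3 : ℝ) / 2 = 1 + 1 / 2 by norm_num, rpow_add' hx (by norm_num), rpow_one,
    sqrt_eq_rpow]

theorem threshold_lower_bound_general (a b S η ν : ℝ)
    (ha : 0 < a) (hb : 0 < b) (hS : 0 < S) (hη : 0 < η)
    (h1 : ν ≤ (S ^ 3)⁻¹ * η ^ 3) (h2 : a * η + b * η ^ 2 ≤ ν) :
    1 / 4 * a * b * S ^ 3 + 1 / 24 * b ^ 3 * S ^ 6
        + 1 / 24 * (b ^ 2 * S ^ 4 + 4 * a * S) ^ ((3 : ℝ) / 2)
      ≤ a / 4 * η + 1 / 12 * ν := by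
  set E := √(b ^ 2 * S ^ 4 + 4 * a * S)
  have hE : E ^ 2 = b ^ 2 * S ^ 4 + 4 * a * S := sq_sqrt (by positivity)
  have hquad : b * S ^ 3 * η + a * S ^ 3 ≤ η ^ 2 := by
    have := (le_inv_mul_iff₀ (by positivity)).1 (h2.trans h1)
    nlinarith
  have hdiscrim : √((b * S ^ 3) ^ 2 + 4 * (a * S ^ 3)) = S * E := by
    rw [show (b * S ^ 3) ^ 2 + 4 * (a * S ^ 3) = S ^ 2 * (b ^ 2 * S ^ 4 + 4 * a * S) by ring,
      sqrt_mul' _ (by positivity), sqrt_sq hS.le]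
  set η₀ := (b * S ^ 3 + S * E) / 2
  have hroot : η₀ ≤ η := by
    simpa only [hdiscrim] using add_sqrt_discrim_div_two_le (by positivity) hη hquad
  calc 1 / 4 * a * b * S ^ 3 + 1 / 24 * b ^ 3 * S ^ 6
        + 1 / 24 * (b ^ 2 * S ^ 4 + 4 * a * S) ^ ((3 : ℝ) / 2)
      = a / 3 * η₀ + b / 12 * η₀ ^ 2 := by
        rw [rpow_three_halves (by positivity)]
        linear_combination -(b * S ^ 2 / 48) * hE
    _ ≤ a / 3 * η + b / 12 * η ^ 2 := by
        have : 0 ≤ η₀ := by positivity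
        gcongr
    _ ≤ a / 4 * η + 1 / 12 * ν := by linarith

/-- **Eq. (4.11) of Lemma 4.3.** If `a, b, S > 0`, `η, ν > 0`, `ν ≤ S⁻³ η³` and
`ν ≥ aη + bη²`, then `(a/4)η + (1/12)ν ≥ Λ` where
`Λ = (1/4)abS³ + (1/24)b³S⁶ + (1/24)(b²S⁴ + 4aS)^{3/2}`. -/
theorem threshold_lower_bound (a b S η ν : ℝ)
    (ha : 0 < a) (hb : 0 < b) (hS : 0 < S) (hη : 0 < η) (hν : 0 < ν)
    (h1 : ν ≤ (S ^ 3)⁻¹ * η ^ 3) (h2 : a * η + b * η ^ 2 ≤ ν) :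
    1 / 4 * a * b * S ^ 3 + 1 / 24 * b ^ 3 * S ^ 6
        + 1 / 24 * (b ^ 2 * S ^ 4 + 4 * a * S) ^ ((3 : ℝ) / 2)
      ≤ a / 4 * η + 1 / 12 * ν :=
  threshold_lower_bound_general a b S η ν ha hb hS hη h1 h2
end

section
/- Let $a, b, S, D, C > 0$ and $1 \le q < 2$. Define $\tilde g(t) = \frac{a}{2} S^{3/2} t^2 + \frac{b}{4} S^3 t^4 - \frac{1}{6} S^{3/2} t^6$ and $\Lambda = \frac{1}{4} a b S^3 + \frac{1}{24} b^3 S^6 + \frac{1}{24}(b^2 S^4 + 4 a S)^{3/2}$. Then there exists $\lambda_2 > 0$ such that for every $\lambda \in (0, \lambda_2)$ one has $\sup_{t \ge 0} \left( \tilde g(t) - \frac{\lambda D}{q} t^q \right) < \Lambda - C \lambda^{\frac{2}{2-q}}$. -/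
open Real

/-!
With `v = √S` and `u = √(b²S⁴ + 4aS)` one has
`48 (Λ - g̃(t)) = (2vt² - bv⁴ - u)² (2vt² + 2u - bv⁴)`, so `g̃ ≤ Λ`. As `g̃(0) = 0 < Λ`,
`g̃` stays below some `m < Λ` on an interval `[0, t₀]`, while for `t ≥ t₀` the sublinear term
costs at least `λ D t₀^q / q`. Hence the supremum is at most `Λ - cλ` for small `λ`,
and `C λ^{2/(2-q)} = o(λ)` because `2/(2-q) > 1`.
-/

open Filter Set Topology

namespace Kirchhoff

/- The paper's `g̃` and `Λ`. -/
noncomputable def energyAlongExtremal (a b S t : ℝ) : ℝ :=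
  a / 2 * S ^ ((3 : ℝ) / 2) * t ^ 2 + b / 4 * S ^ 3 * t ^ 4 - 1 / 6 * S ^ ((3 : ℝ) / 2) * t ^ 6

noncomputable def compactnessLevel (a b S : ℝ) : ℝ :=
  1 / 4 * a * b * S ^ 3 + 1 / 24 * b ^ 3 * S ^ 6
    + 1 / 24 * (b ^ 2 * S ^ 4 + 4 * a * S) ^ ((3 : ℝ) / 2)

lemma rpow_three_halves {x : ℝ} (hx : 0 ≤ x) : x ^ ((3 : ℝ) / 2) = √x ^ 3 := by
  rw [rpow_div_two_eq_sqrt 3 hx]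
  exact_mod_cast rpow_natCast (√x) 3

lemma energyAlongExtremal_le_compactnessLevel {a S : ℝ} (ha : 0 ≤ a) (hS : 0 ≤ S)
    (b t : ℝ) : energyAlongExtremal a b S t ≤ compactnessLevel a b S := by
  set v := √S with hv_def
  set u := √(b ^ 2 * S ^ 4 + 4 * a * S) with hu_def
  have hv : 0 ≤ v := sqrt_nonneg S
  have hu : 0 ≤ u := sqrt_nonneg _
  have hS_eq : S = v ^ 2 := (sq_sqrt hS).symm
  have hu_sq : u ^ 2 = b ^ 2 * v ^ 8 + 4 * a * v ^ 2 := by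
    rw [hu_def, sq_sqrt (by positivity), hS_eq]; ring
  have hbu : b * v ^ 4 ≤ u := by
    nlinarith [mul_nonneg ha (sq_nonneg v), abs_le_of_sq_le_sq' (by nlinarith) hu]
  have key : 48 * (compactnessLevel a b S - energyAlongExtremal a b S t)
      = (2 * v * t ^ 2 - b * v ^ 4 - u) ^ 2 * (2 * v * t ^ 2 + 2 * u - b * v ^ 4) := by
    rw [compactnessLevel, energyAlongExtremal, rpow_three_halves hS,
      rpow_three_halves (by positivity), ← hu_def, ← hv_def, hS_eq]
    linear_combination (6 * t ^ 2 * v - 3 * b * v ^ 4) * hu_sq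
  have hfactor : 0 ≤ 2 * v * t ^ 2 + 2 * u - b * v ^ 4 := by
    nlinarith [mul_nonneg hv (sq_nonneg t)]
  nlinarith [mul_nonneg (sq_nonneg (2 * v * t ^ 2 - b * v ^ 4 - u)) hfactor]

lemma compactnessLevel_pos {a b S : ℝ} (ha : 0 < a) (hb : 0 < b) (hS : 0 < S) :
    0 < compactnessLevel a b S := by
  unfold compactnessLevel; positivity

lemma continuous_energyAlongExtremal (a b S : ℝ) :
    Continuous (energyAlongExtremal a b S) := by
  unfold energyAlongExtremal; fun_prop

end Kirchhoff

lemma eventually_forall_sub_mul_le {g h : ℝ → ℝ} {L : ℝ} (hgL : ∀ t, 0 ≤ t → g t ≤ L)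
    (hg0 : g 0 < L) (hgc : ContinuousAt g 0) (hh : MonotoneOn h (Ici 0)) (hh0 : 0 ≤ h 0)
    (hpos : ∀ t, 0 < t → 0 < h t) :
    ∃ c > 0, ∀ᶠ lam in 𝓝[>] 0, ∀ t, 0 ≤ t → g t - lam * h t ≤ L - c * lam := by
  obtain ⟨m, hgm, hmL⟩ := exists_between hg0
  obtain ⟨δ, hδ, hsmall⟩ := Metric.eventually_nhds_iff.1 (hgc.eventually (gt_mem_nhds hgm))
  have hδ2 : 0 < δ / 2 := half_pos hδ
  refine ⟨h (δ / 2), hpos _ hδ2, ?_⟩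
  filter_upwards [Ioo_mem_nhdsGT (div_pos (sub_pos.2 hmL) (hpos _ hδ2))]
    with lam ⟨hlam, hlam'⟩ t ht
  have hlam_c : lam * h (δ / 2) < L - m := (lt_div_iff₀ (hpos _ hδ2)).1 hlam'
  rcases le_total t (δ / 2) with hle | hge
  · have hgt : g t < m := hsmall (by rw [Real.dist_eq, sub_zero, abs_of_nonneg ht]; linarith)
    have hht : 0 ≤ h t := hh0.trans (hh self_mem_Ici ht ht)
    nlinarith
  · have hht : h (δ / 2) ≤ h t := hh hδ2.le (hδ2.le.trans hge) hge
    nlinarith [hgL t ht]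

lemma eventually_mul_rpow_lt_mul {p : ℝ} (hp : 1 < p) (C : ℝ) {c : ℝ} (hc : 0 < c) :
    ∀ᶠ lam in 𝓝[>] (0 : ℝ), C * lam ^ p < c * lam := by
  have hlim : Tendsto (fun lam : ℝ => C * lam ^ (p - 1)) (𝓝 0) (𝓝 0) := by
    simpa [zero_rpow (sub_pos.2 hp).ne'] using
      ((continuousAt_rpow_const 0 (p - 1) (Or.inr (sub_pos.2 hp).le)).const_mul C).tendsto
  filter_upwards [nhdsWithin_le_nhds (hlim.eventually (gt_mem_nhds hc)), self_mem_nhdsWithin]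
    with lam hsmall hlam
  have hlam : (0 : ℝ) < lam := hlam
  calc C * lam ^ p = C * lam ^ (p - 1) * lam := by
        rw [rpow_sub_one hlam.ne', mul_assoc, div_mul_cancel₀ _ hlam.ne']
    _ < c * lam := mul_lt_mul_of_pos_right hsmall hlam

open Kirchhoff in
theorem sup_below_threshold_general (a b S D C q : ℝ)
    (ha : 0 < a) (hb : 0 < b) (hS : 0 < S) (hD : 0 < D)
    (hq1 : 1 ≤ q) (hq2 : q < 2) :
    ∃ lam₂ > 0, ∀ lam : ℝ, 0 < lam → lam < lam₂ →
      sSup ((fun t : ℝ =>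
            a / 2 * S ^ ((3 : ℝ) / 2) * t ^ 2 + b / 4 * S ^ 3 * t ^ 4
              - 1 / 6 * S ^ ((3 : ℝ) / 2) * t ^ 6 - lam * D / q * t ^ q) '' Set.Ici 0)
        < 1 / 4 * a * b * S ^ 3 + 1 / 24 * b ^ 3 * S ^ 6
            + 1 / 24 * (b ^ 2 * S ^ 4 + 4 * a * S) ^ ((3 : ℝ) / 2)
          - C * lam ^ ((2 : ℝ) / (2 - q)) := by
  have hq : 0 < q := one_pos.trans_le hq1
  have hexp : 1 < 2 / (2 - q) := by rw [one_lt_div (by linarith)]; linarith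
  obtain ⟨c, hc, hbound⟩ := eventually_forall_sub_mul_le (h := fun t => D / q * t ^ q)
    (fun t _ => energyAlongExtremal_le_compactnessLevel ha.le hS.le b t)
    (by simpa [energyAlongExtremal] using compactnessLevel_pos ha hb hS)
    (continuous_energyAlongExtremal a b S).continuousAt
    (fun s hs t _ hst =>
      mul_le_mul_of_nonneg_left (rpow_le_rpow hs hst hq.le) (by positivity))
    (by positivity) (fun t ht => by positivity)
  obtain ⟨lam₂, hlam₂, hsub⟩ := mem_nhdsGT_iff_exists_Ioo_subset.1
    (hbound.and (eventually_mul_rpow_lt_mul hexp C hc))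
  refine ⟨lam₂, hlam₂, fun lam hlam hlam' => ?_⟩
  obtain ⟨hle, hlt⟩ := hsub ⟨hlam, hlam'⟩
  refine (csSup_le (nonempty_Ici.image _) (forall_mem_image.2 fun t ht => ?_)).trans_lt
    (sub_lt_sub_left hlt (compactnessLevel a b S))
  calc _ = energyAlongExtremal a b S t - lam * (D / q * t ^ q) := by
        rw [energyAlongExtremal]; ring
    _ ≤ _ := hle t ht

/-- **Lemma 4.4, scalar form.** For `a, b, S, D, C > 0` and `1 ≤ q < 2`, with
`g̃(t) = (a/2)S^{3/2}t² + (b/4)S³t⁴ - (1/6)S^{3/2}t⁶` and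
`Λ = (1/4)abS³ + (1/24)b³S⁶ + (1/24)(b²S⁴ + 4aS)^{3/2}`, there is `λ₂ > 0` such that
for every `λ ∈ (0, λ₂)` one has
`sup_{t ≥ 0} (g̃(t) - (λD/q)t^q) < Λ - C λ^{2/(2-q)}`. -/
theorem sup_below_threshold (a b S D C q : ℝ)
    (ha : 0 < a) (hb : 0 < b) (hS : 0 < S) (hD : 0 < D) (hC : 0 < C)
    (hq1 : 1 ≤ q) (hq2 : q < 2) :
    ∃ lam₂ > 0, ∀ lam : ℝ, 0 < lam → lam < lam₂ →
      sSup ((fun t : ℝ =>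
            a / 2 * S ^ ((3 : ℝ) / 2) * t ^ 2 + b / 4 * S ^ 3 * t ^ 4
              - 1 / 6 * S ^ ((3 : ℝ) / 2) * t ^ 6 - lam * D / q * t ^ q) '' Set.Ici 0)
        < 1 / 4 * a * b * S ^ 3 + 1 / 24 * b ^ 3 * S ^ 6
            + 1 / 24 * (b ^ 2 * S ^ 4 + 4 * a * S) ^ ((3 : ℝ) / 2)
          - C * lam ^ ((2 : ℝ) / (2 - q)) :=
  sup_below_threshold_general a b S D C q ha hb hS hD hq1 hq2
end
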